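/- Let X be a finite T0 space that is a unique path space (every pair of points is connected by at most one directed path in the Hasse diagram of the specialization order). Then for every x ∈ X, the open set U_x \ {x} is the disjoint union of the sets U_y, where y ranges over the closed points of the subspace U_x \ {x}. -/

import Mathlib

/-- Minimal open neighbourhood of a point: intersection of all opens containing it. -/
def minSet {X : Type*} [TopologicalSpace X] (x : X) : Set X :=
  ⋂₀ {U : Set X | IsOpen U ∧ x ∈ U}

/-- The Hasse-diagram arrow `y → x`: `y` is a closed point of the subspace `U_x \ {x}`. -/
def HasseArrow {X : Type*} [TopologicalSpace X] (y x : X) : Prop :=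
  y ∈ minSet x \ {x} ∧ closure ({y} : Set X) ∩ (minSet x \ {x}) ⊆ {y}

/-- `l` is a directed path in the Hasse diagram from `a` to `b`. -/
def IsHassePath {X : Type*} [TopologicalSpace X] (a b : X) (l : List X) : Prop :=
  List.Chain (HasseArrow) a l ∧ (a :: l).getLast (List.cons_ne_nil a l) = b

/-- `X` is a unique path space: any two points are connected by at most one directed path
in the Hasse diagram of the specialization order. -/
def UniquePathSpace (X : Type*) [TopologicalSpace X] : Prop :=
  ∀ (a b : X) (l₁ l₂ : List X), IsHassePath a b l₁ → IsHassePath a b l₂ → l₁ = l₂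

/-!
`w ∈ U_x` means `w ⤳ x`, and in a T0 space the Hasse arrows are exactly the covering relations
of the specialization order; in a finite space every specialization `w ⤳ x` is therefore
realized by a directed Hasse path. So each `w ∈ U_x \ {x}` lies in `U_y` for the last arrow
`y → x` of such a path. If `w ∈ U_y ∩ U_z` for arrows `y → x` and `z → x`, appending `x` to paths
from `w` to `y` and from `w` to `z` yields two paths from `w` to `x`; they coincide, so `y = z`.
-/

open Relation Topology

section
variable {X : Type*} [TopologicalSpace X]

theorem mem_minSet_iff {x y : X} : y ∈ minSet x ↔ y ⤳ x := by
  simp only [minSet, Set.mem_sInter, Set.mem_ofPred_eq, and_imp, specializes_iff_forall_open]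

theorem HasseArrow.specializes {x y : X} (h : HasseArrow y x) : y ⤳ x :=
  mem_minSet_iff.mp h.1.1

theorem HasseArrow.minSet_subset [T0Space X] {x y : X} (h : HasseArrow y x) :
    minSet y ⊆ minSet x \ {x} := by
  intro w hw
  rw [mem_minSet_iff] at hw
  refine ⟨mem_minSet_iff.mpr (hw.trans h.specializes), ?_⟩
  rintro rfl
  exact h.1.2 (h.specializes.antisymm hw).eq

-- `Specialization X` is ordered so that `U_x` is the upper set of `x`, hence the reversal.
theorem hasseArrow_iff_covBy [T0Space X] {x y : X} :
    HasseArrow y x ↔ Specialization.toEquiv x ⋖ Specialization.toEquiv y := by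
  simp only [covBy_iff_lt_and_eq_or_eq, Specialization.toEquiv.surjective.forall, HasseArrow,
    lt_iff_le_and_ne, Set.subset_def, Set.mem_inter_iff, Set.mem_sdiff, Set.mem_singleton_iff,
    mem_minSet_iff, ← specializes_iff_mem_closure, Specialization.toEquiv_le_toEquiv, ne_eq,
    Specialization.toEquiv_inj]
  grind

theorem reflTransGen_hasseArrow_iff [Finite X] [T0Space X] {x y : X} :
    ReflTransGen HasseArrow y x ↔ y ⤳ x := by
  refine ⟨fun h => ?_, fun h => ?_⟩
  · induction h with
    | refl => rfl
    | tail _ hab ih => exact ih.trans hab.specializes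
  · have : Finite (Specialization X) := ‹Finite X›
    let : LocallyFiniteOrder (Specialization X) := .ofFiniteIcc fun _ _ => Set.toFinite _
    have := le_iff_reflTransGen_covBy.mp (Specialization.toEquiv_le_toEquiv.mpr h)
    exact ReflTransGen.mono (fun _ _ => hasseArrow_iff_covBy.mpr) _ _ (ReflTransGen.swap _ _ this)

theorem exists_hasseArrow_of_specializes [Finite X] [T0Space X] {w x : X} (hwx : w ⤳ x)
    (hne : w ≠ x) : ∃ y, HasseArrow y x ∧ w ⤳ y := by
  obtain rfl | ⟨y, hwy, hyx⟩ := (reflTransGen_hasseArrow_iff.mpr hwx).cases_tail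
  · exact absurd rfl hne
  · exact ⟨y, hyx, reflTransGen_hasseArrow_iff.mp hwy⟩

theorem Relation.ReflTransGen.exists_isHassePath {a b : X} (h : ReflTransGen HasseArrow a b) :
    ∃ l, IsHassePath a b l :=
  List.exists_isChain_cons_of_relationReflTransGen h

theorem IsHassePath.concat {a b c : X} {l : List X} (h : IsHassePath a b l)
    (hbc : HasseArrow b c) : IsHassePath a c (l ++ [c]) :=
  ⟨h.1.append (.singleton c) (by simp [List.getLast?_eq_some_getLast, h.2, hbc]), by simp⟩

theorem UniquePathSpace.eq_of_hasseArrow [Finite X] [T0Space X] (hX : UniquePathSpace X)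
    {w x y z : X} (hy : HasseArrow y x) (hz : HasseArrow z x) (hwy : w ⤳ y) (hwz : w ⤳ z) :
    y = z := by
  obtain ⟨p, hp⟩ := (reflTransGen_hasseArrow_iff.mpr hwy).exists_isHassePath
  obtain ⟨q, hq⟩ := (reflTransGen_hasseArrow_iff.mpr hwz).exists_isHassePath
  obtain rfl : p = q := List.append_cancel_right (hX w x _ _ (hp.concat hy) (hq.concat hz))
  exact hp.2.symm.trans hq.2

end

/-- In a finite T0 unique path space, `U_x \ {x}` is the disjoint union of the sets `U_y`,
where `y` runs through the closed points of the subspace `U_x \ {x}`. -/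
theorem stmt_16 {X : Type*} [TopologicalSpace X] [Finite X] [T0Space X]
    (hX : UniquePathSpace X) (x : X) :
    (⋃ y ∈ {y : X | HasseArrow y x}, minSet y) = minSet x \ {x} ∧
    ∀ y z : X, HasseArrow y x → HasseArrow z x → y ≠ z →
      Disjoint (minSet y) (minSet z) := by
  refine ⟨subset_antisymm ?_ fun w hw => ?_, fun y z hy hz hne => ?_⟩
  · exact Set.iUnion₂_subset fun y hy => hy.minSet_subset
  · obtain ⟨y, hy, hwy⟩ := exists_hasseArrow_of_specializes (mem_minSet_iff.mp hw.1) hw.2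
    exact Set.mem_biUnion hy (mem_minSet_iff.mpr hwy)
  · refine Set.disjoint_left.mpr fun w hwy hwz => hne ?_
    exact hX.eq_of_hasseArrow hy hz (mem_minSet_iff.mp hwy) (mem_minSet_iff.mp hwz)
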